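/- arXiv:2510.01032 — 2 statements merged into one kernel-verified Lean document; each statement's English description precedes it below -/
import Mathlib

section
/- Let ι be an index type, f : ι → ℝ a score function, E a real vector space, V : ι → E a value assignment, and let S and M be disjoint nonempty finite subsets of ι with T = S ∪ M. Suppose V j = v for every j ∈ M (all appended tokens have the identical value vector v). Set λ = (∑_{j ∈ S} exp(f j)) / (∑_{j ∈ T} exp(f j)). Then 0 < λ < 1 and the attention output over T satisfies ∑_{j ∈ T} (exp(f j)/∑_{k ∈ T} exp(f k)) • V j = λ • (∑_{j ∈ S} (exp(f j)/∑_{k ∈ S} exp(f k)) • V j) + (1 − λ) • v; that is, the new attention output is an affine transformation of the original attention output: Attn_new = λ · Attn_old + Σ_σ with bias term Σ_σ = (1 − λ) • v. -/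
/-!
The attention output over `X` is the centre of mass of the values `V` with weights `exp ∘ f`.
Splitting `T = S ∪ M` splits this centre of mass into the convex combination of those over
`S` and over `M`, with coefficients the shares `λ` and `1 - λ` of the total weight; the centre
of mass over `M` is `v` because all values there coincide.
-/

open Finset

namespace Finset

variable {ι R E : Type*} [Field R] [AddCommGroup E] [Module R E]

theorem sum_div_smul_eq_centerMass (t : Finset ι) (w : ι → R) (z : ι → E) :
    ∑ i ∈ t, (w i / ∑ j ∈ t, w j) • z i = t.centerMass w z := by
  simp only [centerMass, smul_sum, smul_smul, div_eq_inv_mul]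

theorem centerMass_union [DecidableEq ι] {s t : Finset ι} (hst : Disjoint s t) {w : ι → R}
    (hs : ∑ i ∈ s, w i ≠ 0) (ht : ∑ i ∈ t, w i ≠ 0) (z : ι → E) :
    (s ∪ t).centerMass w z =
      ((∑ i ∈ s, w i) / ∑ i ∈ s ∪ t, w i) • s.centerMass w z +
        ((∑ i ∈ t, w i) / ∑ i ∈ s ∪ t, w i) • t.centerMass w z := by
  simp only [centerMass, sum_union hst, smul_smul, smul_add, div_mul_eq_mul_div,
    mul_inv_cancel₀ hs, mul_inv_cancel₀ ht, one_div]

theorem centerMass_eq_of_forall_eq {t : Finset ι} {w : ι → R} (hw : ∑ i ∈ t, w i ≠ 0)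
    {z : ι → E} {c : E} (hz : ∀ i ∈ t, z i = c) : t.centerMass w z = c := by
  rw [centerMass_congr_fun (z' := Function.const ι c) fun i hi _ => hz i hi,
    centerMass_const hw]

end Finset

/-- Inserting a block `M` of meaningless tokens with identical value vector `v` turns
the attention output over `T = S ∪ M` into an affine transformation of the attention
output over `S`: `Attn_new = lam • Attn_old + (1 - lam) • v`, with `0 < lam < 1`. -/
theorem attention_affine_transform {ι : Type*} [DecidableEq ι] {E : Type*}
    [AddCommGroup E] [Module ℝ E] (f : ι → ℝ) (V : ι → E) (v : E)
    (S M T : Finset ι) (hdisj : Disjoint S M) (hS : S.Nonempty) (hM : M.Nonempty)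
    (hT : T = S ∪ M) (hv : ∀ j ∈ M, V j = v) (lam : ℝ)
    (hlam : lam = (∑ j ∈ S, Real.exp (f j)) / (∑ j ∈ T, Real.exp (f j))) :
    (0 < lam ∧ lam < 1) ∧
      ∑ j ∈ T, (Real.exp (f j) / ∑ k ∈ T, Real.exp (f k)) • V j =
        lam • (∑ j ∈ S, (Real.exp (f j) / ∑ k ∈ S, Real.exp (f k)) • V j)
          + (1 - lam) • v := by
  subst hT hlam
  have hA : 0 < ∑ j ∈ S, Real.exp (f j) := sum_pos (fun j _ => Real.exp_pos (f j)) hS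
  have hB : 0 < ∑ j ∈ M, Real.exp (f j) := sum_pos (fun j _ => Real.exp_pos (f j)) hM
  have hshare : 1 - (∑ j ∈ S, Real.exp (f j)) / ∑ j ∈ S ∪ M, Real.exp (f j) =
      (∑ j ∈ M, Real.exp (f j)) / ∑ j ∈ S ∪ M, Real.exp (f j) := by
    rw [sum_union hdisj]
    field_simp
    ring
  refine ⟨⟨?_, ?_⟩, ?_⟩
  · rw [sum_union hdisj]
    positivity
  · rw [sum_union hdisj, div_lt_one (by positivity)]
    linarith
  · simp only [sum_div_smul_eq_centerMass, hshare]
    rw [centerMass_union hdisj hA.ne' hB.ne', centerMass_eq_of_forall_eq hB.ne' hv]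
end

section
/- Let (Ω, ℱ, μ) be a probability space, σ : Ω → ℝ measurable with ∫ σ dμ = 0 and ∫ σ⁴ dμ < ∞, let a ∈ ℝ, and let φ : ℝ → ℝ be twice differentiable with |φ''(x)| ≤ M for all x ∈ ℝ. Then φ(a + σ) is square-integrable and | Var[φ(a + σ)] − (φ'(a))² · Var[σ] | ≤ |φ'(a)| · M · ∫ |σ|³ dμ + (M²/4) · ∫ σ⁴ dμ. -/
/-!
Since `φ'` is `M`-Lipschitz, Taylor's formula gives `φ (a + σ) = φ a + φ'(a) σ + R` with
`|R| ≤ (M/2) σ²`. Hence `Var[φ (a + σ)] - φ'(a)² Var[σ] = 2 φ'(a) Cov[σ, R] + Var[R]`, where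
`Cov[σ, R] = E[σ R]` because `σ` is centred, so `|Cov[σ, R]| ≤ (M/2) E|σ|³`, and
`0 ≤ Var[R] ≤ E[R²] ≤ (M²/4) E[σ⁴]`.
-/

open MeasureTheory ProbabilityTheory

theorem norm_sub_sub_smul_le_of_lipschitz_deriv {E : Type*} [NormedAddCommGroup E]
    [NormedSpace ℝ E] {f f' : ℝ → E} {M : ℝ} (hf : ∀ x, HasDerivAt f (f' x) x)
    (hf' : ∀ x y, ‖f' x - f' y‖ ≤ M * |x - y|) (a t : ℝ) :
    ‖f (a + t) - f a - t • f' a‖ ≤ M / 2 * t ^ 2 := by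
  -- fence `g` on `[0, 1]` by `u ↦ M t² u² / 2`
  set g : ℝ → E := fun u => f (a + u * t) - f a - (u * t) • f' a
  have hg : ∀ u, HasDerivAt g (t • (f' (a + u * t) - f' a)) u := by
    intro u
    have hline : HasDerivAt (fun u : ℝ => u * t) t u := by
      simpa using (hasDerivAt_id u).mul_const t
    have := (((hf (a + u * t)).scomp u (hline.const_add a)).sub_const (f a)).sub
      (hline.smul_const (f' a))
    rwa [← smul_sub] at this
  have hB : ∀ u, HasDerivAt (fun u : ℝ => M / 2 * t ^ 2 * u ^ 2) (M * t ^ 2 * u) u := fun u =>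
    ((hasDerivAt_pow 2 u).const_mul (M / 2 * t ^ 2)).congr_deriv (by push_cast; ring)
  have hbound : ∀ u ∈ Set.Ico (0 : ℝ) 1, ‖t • (f' (a + u * t) - f' a)‖ ≤ M * t ^ 2 * u := by
    rintro u ⟨hu, -⟩
    calc ‖t • (f' (a + u * t) - f' a)‖ ≤ |t| * (M * |a + u * t - a|) := by
          rw [norm_smul, Real.norm_eq_abs]
          exact mul_le_mul_of_nonneg_left (hf' _ _) (abs_nonneg t)
      _ = M * t ^ 2 * u := by
          rw [add_sub_cancel_left, abs_mul, abs_of_nonneg hu, ← sq_abs t]; ring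
  have := image_norm_le_of_norm_deriv_right_le_deriv_boundary
    (fun u _ => (hg u).continuousAt.continuousWithinAt) (fun u _ => (hg u).hasDerivWithinAt)
    (by simp [g]) hB hbound (x := 1) ⟨zero_le_one, le_rfl⟩
  simpa [g] using this

theorem abs_sub_sub_deriv_mul_le {φ : ℝ → ℝ} {M : ℝ} (hφ : Differentiable ℝ φ)
    (hφ' : Differentiable ℝ (deriv φ)) (hφ'' : ∀ x, |deriv (deriv φ) x| ≤ M) (a t : ℝ) :
    |φ (a + t) - φ a - deriv φ a * t| ≤ M / 2 * t ^ 2 := by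
  have hlip : ∀ x y, ‖deriv φ x - deriv φ y‖ ≤ M * |x - y| := fun x y =>
    Convex.norm_image_sub_le_of_norm_deriv_le (fun z _ => hφ'.differentiableAt)
      (fun z _ => hφ'' z) convex_univ trivial trivial
  simpa [mul_comm t] using
    norm_sub_sub_smul_le_of_lipschitz_deriv (fun x => (hφ x).hasDerivAt) hlip a t

section QuadraticRemainder

variable {Ω : Type*} [MeasurableSpace Ω] {μ : Measure Ω} {X R : Ω → ℝ} {C : ℝ}

theorem memLp_four_of_integrable_pow_four (hX : AEStronglyMeasurable X μ)
    (hX4 : Integrable (fun ω => X ω ^ 4) μ) : MemLp X 4 μ := by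
  rw [← integrable_norm_rpow_iff hX (by norm_num) (by norm_num)]
  simpa [Real.norm_eq_abs, Even.pow_abs ⟨2, rfl⟩] using hX4

theorem sq_le_of_abs_le_mul_sq {r x C : ℝ} (h : |r| ≤ C * x ^ 2) : r ^ 2 ≤ C ^ 2 * x ^ 4 :=
  calc r ^ 2 = |r| ^ 2 := (sq_abs r).symm
    _ ≤ (C * x ^ 2) ^ 2 := pow_le_pow_left₀ (abs_nonneg r) h 2
    _ = C ^ 2 * x ^ 4 := by ring

theorem integral_sq_le_of_abs_le_mul_sq (hX4 : Integrable (fun ω => X ω ^ 4) μ)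
    (hRX : ∀ ω, |R ω| ≤ C * X ω ^ 2) : ∫ ω, R ω ^ 2 ∂μ ≤ C ^ 2 * ∫ ω, X ω ^ 4 ∂μ := by
  rw [← integral_const_mul]
  exact integral_mono_of_nonneg (.of_forall fun ω => sq_nonneg _) (hX4.const_mul _)
    (.of_forall fun ω => sq_le_of_abs_le_mul_sq (hRX ω))

theorem memLp_two_of_abs_le_mul_sq (hX4 : Integrable (fun ω => X ω ^ 4) μ)
    (hR : AEStronglyMeasurable R μ) (hRX : ∀ ω, |R ω| ≤ C * X ω ^ 2) : MemLp R 2 μ := by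
  refine (memLp_two_iff_integrable_sq hR).2 <| (hX4.const_mul (C ^ 2)).mono' (hR.pow 2)
    (.of_forall fun ω => ?_)
  rw [Real.norm_of_nonneg (sq_nonneg _)]
  exact sq_le_of_abs_le_mul_sq (hRX ω)

variable [IsProbabilityMeasure μ]

theorem variance_le_of_abs_le_mul_sq (hX4 : Integrable (fun ω => X ω ^ 4) μ)
    (hR : AEStronglyMeasurable R μ) (hRX : ∀ ω, |R ω| ≤ C * X ω ^ 2) :
    Var[R; μ] ≤ C ^ 2 * ∫ ω, X ω ^ 4 ∂μ :=
  (variance_le_expectation_sq hR).trans (integral_sq_le_of_abs_le_mul_sq hX4 hRX)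

theorem abs_covariance_le_of_abs_le_mul_sq (hX : MemLp X 4 μ) (hX0 : μ[X] = 0)
    (hR : MemLp R 2 μ) (hRX : ∀ ω, |R ω| ≤ C * X ω ^ 2) :
    |cov[X, R; μ]| ≤ C * ∫ ω, |X ω| ^ 3 ∂μ := by
  have hX3 : Integrable (fun ω => |X ω| ^ 3) μ := by
    simpa using
      (hX.mono_exponent (by norm_num : (3 : ENNReal) ≤ 4)).integrable_norm_pow three_ne_zero
  rw [covariance_eq_sub (hX.mono_exponent (by norm_num)) hR, hX0, zero_mul, sub_zero,
    ← integral_const_mul]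
  refine abs_integral_le_integral_abs.trans <| integral_mono_of_nonneg
    (.of_forall fun ω => abs_nonneg _) (hX3.const_mul C) (.of_forall fun ω => ?_)
  calc |X ω * R ω| = |X ω| * |R ω| := abs_mul _ _
    _ ≤ |X ω| * (C * X ω ^ 2) := mul_le_mul_of_nonneg_left (hRX ω) (abs_nonneg _)
    _ = C * |X ω| ^ 3 := by rw [← sq_abs (X ω)]; ring

theorem variance_const_add_mul_add (hX : MemLp X 2 μ) (hR : MemLp R 2 μ) (c b : ℝ) :
    Var[fun ω => c + b * X ω + R ω; μ] =
      b ^ 2 * Var[X; μ] + 2 * b * cov[X, R; μ] + Var[R; μ] := by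
  simp_rw [add_assoc]
  rw [variance_const_add (X := fun ω => b * X ω + R ω)
      ((hX.const_mul b).add hR).aestronglyMeasurable,
    variance_fun_add (hX.const_mul b) hR, variance_const_mul, covariance_const_mul_left]
  ring

end QuadraticRemainder

/-- To leading order, the variance of the activation output `φ (a + σ)` under a
zero-mean perturbation `σ` equals `φ'(a)²` times the input variance, with explicit
higher-order control via a uniform bound `M` on `φ''`. -/
theorem variance_activation_leading_order {Ω : Type*} [MeasurableSpace Ω]
    (μ : Measure Ω) [IsProbabilityMeasure μ] (σ : Ω → ℝ) (hσm : Measurable σ)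
    (hσ0 : (∫ ω, σ ω ∂μ) = 0) (hσ4 : Integrable (fun ω => (σ ω) ^ 4) μ)
    (a : ℝ) (φ : ℝ → ℝ) (M : ℝ)
    (hφ : Differentiable ℝ φ) (hφ' : Differentiable ℝ (deriv φ))
    (hφ'' : ∀ x : ℝ, |deriv (deriv φ) x| ≤ M) :
    MemLp (fun ω => φ (a + σ ω)) 2 μ ∧
    |variance (fun ω => φ (a + σ ω)) μ - (deriv φ a) ^ 2 * variance σ μ| ≤
      |deriv φ a| * M * (∫ ω, |σ ω| ^ 3 ∂μ)
        + (M ^ 2 / 4) * ∫ ω, (σ ω) ^ 4 ∂μ := by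
  set b := deriv φ a
  set R : Ω → ℝ := fun ω => φ (a + σ ω) - φ a - b * σ ω
  have hRσ : ∀ ω, |R ω| ≤ M / 2 * σ ω ^ 2 := fun ω =>
    abs_sub_sub_deriv_mul_le hφ hφ' hφ'' a (σ ω)
  have hσ : MemLp σ 4 μ := memLp_four_of_integrable_pow_four hσm.aestronglyMeasurable hσ4
  have hσ2 : MemLp σ 2 μ := hσ.mono_exponent (by norm_num)
  have hRm : AEStronglyMeasurable R μ := by
    have := hφ.continuous.measurable
    fun_prop
  have hR : MemLp R 2 μ := memLp_two_of_abs_le_mul_sq hσ4 hRm hRσ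
  have hY : (fun ω => φ (a + σ ω)) = fun ω => φ a + b * σ ω + R ω := by
    funext ω; simp only [R]; ring
  rw [hY]
  refine ⟨((memLp_const (φ a)).add (hσ2.const_mul b)).add hR, ?_⟩
  have hcov := abs_covariance_le_of_abs_le_mul_sq hσ hσ0 hR hRσ
  have hvar := variance_le_of_abs_le_mul_sq hσ4 hRm hRσ
  rw [variance_const_add_mul_add hσ2 hR, add_sub_right_comm, add_sub_cancel_left]
  calc |2 * b * cov[σ, R; μ] + Var[R; μ]|
      ≤ 2 * |b| * |cov[σ, R; μ]| + Var[R; μ] := by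
        simpa [abs_mul, abs_of_nonneg (variance_nonneg R μ)] using
          abs_add_le (2 * b * cov[σ, R; μ]) Var[R; μ]
    _ ≤ 2 * |b| * (M / 2 * ∫ ω, |σ ω| ^ 3 ∂μ) + (M / 2) ^ 2 * ∫ ω, σ ω ^ 4 ∂μ := by
        gcongr
    _ = _ := by ring
end
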